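/- A near-bijection f : Ω → Ω is almost equal to a bijection if and only if ind(f) = 0, where ind(f) = (|Ω \ Ω_f| − |f(Ω \ Ω_f)|) − |Ω \ f(Ω)|. -/

import Mathlib

/-!
`f` is injective on its monoset `M`, and `ind f = |Mᶜ| - |(f '' M)ᶜ|` because `(f '' M)ᶜ` is the
disjoint union of `f '' Mᶜ` and `(range f)ᶜ`. Shrinking the domain of an injection by finitely many
points enlarges the complements of the domain and of the image by the same amount, so
`|Aᶜ| - |(f '' A)ᶜ|` is the same for every cofinite `A ⊆ M`; on the cofinite set where `f` agrees
with a bijection it is `0`. Conversely, if `|Mᶜ| = |(f '' M)ᶜ|`, gluing `f` on `M` with a bijection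
`Mᶜ → (f '' M)ᶜ` gives a bijection.
-/

variable {Ω : Type*}

def monoset (f : Ω → Ω) : Set Ω := {ω | f ⁻¹' {f ω} = {ω}}

def NearBijection (f : Ω → Ω) : Prop :=
  ∃ A B : Set Ω, Aᶜ.Finite ∧ Bᶜ.Finite ∧ Set.BijOn f A B

def AlmostEq (f g : Ω → Ω) : Prop := {ω | f ω ≠ g ω}.Finite

noncomputable def ind (f : Ω → Ω) : ℤ :=
  (((monoset f)ᶜ.ncard : ℤ) - ((f '' (monoset f)ᶜ).ncard : ℤ)) - ((Set.range f)ᶜ.ncard : ℤ)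

open Set Function

section
variable {α β : Type*} {f : α → β} {A : Set α}

theorem Set.InjOn.encard_compl_add_encard_compl_image_of_subset {B : Set α} (hA : InjOn f A)
    (hBA : B ⊆ A) : Bᶜ.encard + (f '' A)ᶜ.encard = Aᶜ.encard + (f '' B)ᶜ.encard := by
  rw [← encard_sdiff_add_encard_of_subset (compl_subset_compl.2 hBA),
    ← encard_sdiff_add_encard_of_subset (compl_subset_compl.2 (image_mono hBA)),
    compl_sdiff_compl, compl_sdiff_compl, ← hA.image_sdiff_subset hBA,
    (hA.mono sdiff_subset).encard_image]
  ac_rfl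

theorem Set.InjOn.encard_compl_eq_encard_compl_image {g : α → β} (hA : InjOn f A)
    (hAfin : Aᶜ.Finite) (hg : Bijective g) (hfg : {x | f x ≠ g x}.Finite) :
    Aᶜ.encard = (f '' A)ᶜ.encard := by
  set B := A \ {x | f x ≠ g x}
  have hBfin : Bᶜ.Finite := by
    rw [Set.compl_sdiff]
    exact hfg.union hAfin
  have hfgB : f '' B = g '' B := image_congr fun x hx => not_not.1 hx.2
  have key := hA.encard_compl_add_encard_compl_image_of_subset (sdiff_subset : B ⊆ A)
  rw [hfgB, ← image_compl_eq hg, hg.injective.encard_image, add_comm (Aᶜ.encard)] at key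
  exact (WithTop.add_left_cancel hBfin.encard_lt_top.ne key).symm

theorem Set.InjOn.exists_bijective_eqOn_of_encard_compl_eq (hA : InjOn f A) (hAfin : Aᶜ.Finite)
    (hcard : Aᶜ.encard = (f '' A)ᶜ.encard) : ∃ g : α → β, Bijective g ∧ EqOn f g A := by
  rcases isEmpty_or_nonempty β with hβ | hβ
  · have := f.isEmpty
    exact ⟨f, ⟨injective_of_subsingleton f, isEmptyElim⟩, eqOn_refl f A⟩
  obtain ⟨e, he⟩ := hAfin.exists_bijOn_of_encard_eq hcard
  classical
  refine ⟨A.piecewise f e, ⟨?_, ?_⟩, (piecewise_eqOn A f e).symm⟩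
  · refine (injective_piecewise_iff A).2 ⟨hA, he.injOn, fun x hx y hy hxy => he.mapsTo hy ?_⟩
    exact hxy ▸ mem_image_of_mem f hx
  · rw [← range_eq_univ, range_piecewise, he.image_eq, union_compl_self]

theorem Set.InjOn.exists_bijective_finite_ne_iff (hA : InjOn f A) (hAfin : Aᶜ.Finite) :
    (∃ g : α → β, Bijective g ∧ {x | f x ≠ g x}.Finite) ↔ Aᶜ.encard = (f '' A)ᶜ.encard := by
  refine ⟨fun ⟨g, hg, hfg⟩ => hA.encard_compl_eq_encard_compl_image hAfin hg hfg, fun hcard => ?_⟩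
  obtain ⟨g, hg, hfg⟩ := hA.exists_bijective_eqOn_of_encard_compl_eq hAfin hcard
  exact ⟨g, hg, hAfin.subset fun x hx hxA => hx (hfg hxA)⟩

end

theorem mem_monoset_iff {f : Ω → Ω} {x : Ω} : x ∈ monoset f ↔ ∀ y, f y = f x → y = x := by
  simp only [monoset, mem_ofPred_eq, Set.ext_iff, mem_preimage, mem_singleton_iff]
  exact ⟨fun h y => (h y).1, fun h y => ⟨h y, fun hy => hy ▸ rfl⟩⟩

theorem injOn_monoset (f : Ω → Ω) : InjOn f (monoset f) :=
  fun _ hx _ _ hxy => (mem_monoset_iff.1 hx _ hxy.symm).symm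

theorem compl_image_monoset (f : Ω → Ω) :
    (f '' monoset f)ᶜ = f '' (monoset f)ᶜ ∪ (range f)ᶜ := by
  ext z
  constructor
  · intro hz
    by_cases h : z ∈ range f
    · obtain ⟨y, rfl⟩ := h
      exact Or.inl ⟨y, fun hy => hz ⟨y, hy, rfl⟩, rfl⟩
    · exact Or.inr h
  · rintro (⟨y, hy, rfl⟩ | h) ⟨x, hx, hxy⟩
    · exact hy (mem_monoset_iff.1 hx y hxy.symm ▸ hx)
    · exact h ⟨x, hxy⟩

namespace NearBijection

variable {f : Ω → Ω}

theorem finite_compl_monoset (hf : NearBijection f) : (monoset f)ᶜ.Finite := by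
  obtain ⟨A, B, hA, -, hbij⟩ := hf
  have hcollide : {x | x ∈ A ∧ f x ∈ f '' Aᶜ}.Finite :=
    Finite.of_finite_image ((hA.image f).subset fun _ ⟨_, hx, hxz⟩ => hxz ▸ hx.2)
      (hbij.injOn.mono fun _ hx => hx.1)
  refine (hA.union hcollide).subset fun x hx => ?_
  by_cases hxA : x ∈ A
  · obtain ⟨y, hyx, hne⟩ : ∃ y, f y = f x ∧ y ≠ x := by
      simpa [mem_monoset_iff] using hx
    exact Or.inr ⟨hxA, y, fun hyA => hne (hbij.injOn hyA hxA hyx), hyx⟩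
  · exact Or.inl hxA

theorem finite_compl_range (hf : NearBijection f) : (range f)ᶜ.Finite := by
  obtain ⟨A, B, -, hB, hbij⟩ := hf
  exact hB.subset (compl_subset_compl.2 (hbij.image_eq ▸ image_subset_range f A))

theorem ind_eq_zero_iff (hf : NearBijection f) :
    ind f = 0 ↔ (monoset f)ᶜ.encard = (f '' monoset f)ᶜ.encard := by
  have hM := hf.finite_compl_monoset
  have hR := hf.finite_compl_range
  have hdisj : Disjoint (f '' (monoset f)ᶜ) (range f)ᶜ :=
    disjoint_compl_right_iff_subset.2 (image_subset_range f _)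
  rw [compl_image_monoset, encard_union_eq hdisj, ← hM.cast_ncard_eq,
    ← (hM.image f).cast_ncard_eq, ← hR.cast_ncard_eq, ← Nat.cast_add, Nat.cast_inj, ind]
  omega

end NearBijection

theorem stmt17_general (f : Ω → Ω) (hf : NearBijection f) :
    (∃ g : Ω → Ω, Function.Bijective g ∧ AlmostEq f g) ↔ ind f = 0 := by
  rw [hf.ind_eq_zero_iff]
  exact (injOn_monoset f).exists_bijective_finite_ne_iff hf.finite_compl_monoset

theorem stmt17 [Infinite Ω] (f : Ω → Ω) (hf : NearBijection f) :
    (∃ g : Ω → Ω, Function.Bijective g ∧ AlmostEq f g) ↔ ind f = 0 :=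
  stmt17_general f hf
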